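/- arXiv:1608.04685 — 2 statements merged into one kernel-verified Lean document; each statement's English description precedes it below -/
import Mathlib

section
/- For every κ > 0, the second derivative of the map k ↦ k·c_ww(k) at κ is strictly negative; that is, the modulational instability index i₁(κ) = (κ c_ww(κ))'' satisfies i₁(κ) < 0 for all κ > 0 (equivalently, the group velocity (κ c_ww(κ))' is strictly decreasing on (0,∞)). -/
/-- The water-wave phase speed `c_ww(k) = √(tanh k / k)` (normalized depth and gravity),
extended by `c_ww(0) = 1`. -/
noncomputable def cww (k : ℝ) : ℝ := if k = 0 then 1 else Real.sqrt (Real.tanh k / k)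

/-!
On `(0, ∞)` the frequency is `ω = √f` with `f k = k tanh k`, so
`ω'' = (2 f f'' - f'²) / (4 f √f)`. With `t = tanh k` and `s = 1 - t²` one has `f' = t + k s` and
`f'' = 2 s (1 - k t)`, and `f'² - 2 f f'' = (t - k s)² + 4 k² t² s > 0`.
-/

open Real Set Filter Topology

theorem Real.hasDerivAt_tanh (x : ℝ) : HasDerivAt tanh (1 - tanh x ^ 2) x := by
  have h := (hasDerivAt_sinh x).div (hasDerivAt_cosh x) (cosh_pos x).ne'
  rw [show sinh / cosh = tanh from funext fun y => (tanh_eq_sinh_div_cosh y).symm] at h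
  refine h.congr_deriv ?_
  have := cosh_pos x
  rw [tanh_eq_sinh_div_cosh]
  field_simp

theorem Real.tanh_pos {x : ℝ} (hx : 0 < x) : 0 < tanh x := by
  rw [tanh_eq_sinh_div_cosh]
  exact div_pos (sinh_pos_iff.2 hx) (cosh_pos x)

theorem hasDerivAt_deriv_sqrt {f f' : ℝ → ℝ} {f'' x : ℝ}
    (hf : ∀ᶠ y in 𝓝 x, HasDerivAt f (f' y) y) (hf' : HasDerivAt f' f'' x) (hx : 0 < f x) :
    HasDerivAt (deriv fun y => √(f y)) ((2 * f x * f'' - f' x ^ 2) / (4 * f x * √(f x))) x := by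
  have hpos : ∀ᶠ y in 𝓝 x, 0 < f y :=
    hf.self_of_nhds.continuousAt.eventually (lt_mem_nhds hx)
  have hderiv : deriv (fun y => √(f y)) =ᶠ[𝓝 x] fun y => f' y / (2 * √(f y)) := by
    filter_upwards [hf, hpos] with y hfy hy
    exact (hfy.sqrt hy.ne').deriv
  have hsqrt : 0 < √(f x) := sqrt_pos.2 hx
  refine hderiv.hasDerivAt_iff.2 <|
    (hf'.div ((hf.self_of_nhds.sqrt hx.ne').const_mul 2) (by positivity)).congr_deriv ?_
  field_simp
  rw [sq_sqrt hx.le]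
  ring

theorem hasDerivAt_mul_tanh (x : ℝ) :
    HasDerivAt (fun y => y * tanh y) (tanh x + x * (1 - tanh x ^ 2)) x := by
  simpa using (hasDerivAt_id' x).fun_mul (hasDerivAt_tanh x)

theorem hasDerivAt_tanh_add_mul_one_sub_tanh_sq (x : ℝ) :
    HasDerivAt (fun y => tanh y + y * (1 - tanh y ^ 2))
      (2 * (1 - tanh x ^ 2) * (1 - x * tanh x)) x := by
  have h := (hasDerivAt_tanh x).fun_add
    ((hasDerivAt_id' x).fun_mul (((hasDerivAt_tanh x).fun_pow 2).const_sub 1))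
  refine h.congr_deriv ?_
  simp only [Nat.cast_ofNat]
  ring

theorem two_mul_mul_tanh_mul_lt_sq {k : ℝ} (hk : 0 < k) :
    2 * (k * tanh k) * (2 * (1 - tanh k ^ 2) * (1 - k * tanh k)) <
      (tanh k + k * (1 - tanh k ^ 2)) ^ 2 := by
  have ht := tanh_pos hk
  have hs : 0 < 1 - tanh k ^ 2 := sub_pos.2 (tanh_sq_lt_one k)
  nlinarith [sq_nonneg (tanh k - k * (1 - tanh k ^ 2)), mul_pos (pow_pos (mul_pos hk ht) 2) hs]

theorem mul_cww_of_pos {k : ℝ} (hk : 0 < k) : k * cww k = √(k * tanh k) := by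
  rw [cww, if_neg hk.ne', show k * tanh k = k ^ 2 * (tanh k / k) by field_simp,
    sqrt_mul (sq_nonneg k), sqrt_sq hk.le]

theorem exists_hasDerivAt_deriv_mul_cww_neg {κ : ℝ} (hκ : 0 < κ) :
    ∃ d < 0, HasDerivAt (deriv fun k => k * cww k) d κ := by
  have heq : (fun k => k * cww k) =ᶠ[𝓝 κ] fun k => √(k * tanh k) := by
    filter_upwards [Ioi_mem_nhds hκ] with k hk
    exact mul_cww_of_pos hk
  have hf : 0 < κ * tanh κ := mul_pos hκ (tanh_pos hκ)
  refine ⟨_, ?_, heq.deriv.hasDerivAt_iff.2 <| hasDerivAt_deriv_sqrt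
    (.of_forall hasDerivAt_mul_tanh) (hasDerivAt_tanh_add_mul_one_sub_tanh_sq κ) hf⟩
  have hsqrt : 0 < √(κ * tanh κ) := sqrt_pos.2 hf
  exact div_neg_of_neg_of_pos (sub_neg.2 (two_mul_mul_tanh_mul_lt_sq hκ)) (by positivity)

/-- For every `κ > 0`, the modulational instability index `i₁(κ) = (κ c_ww(κ))''` is strictly
negative; equivalently, the group velocity `(κ c_ww(κ))'` is strictly decreasing on `(0,∞)`. -/
theorem i1_neg :
    (∀ κ : ℝ, 0 < κ → deriv (deriv (fun k : ℝ => k * cww k)) κ < 0) ∧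
    StrictAntiOn (deriv (fun k : ℝ => k * cww k)) (Set.Ioi 0) := by
  have hneg : ∀ κ : ℝ, 0 < κ → deriv (deriv (fun k : ℝ => k * cww k)) κ < 0 := by
    intro κ hκ
    obtain ⟨d, hd, h⟩ := exists_hasDerivAt_deriv_mul_cww_neg hκ
    rwa [h.deriv]
  refine ⟨hneg, strictAntiOn_of_deriv_neg (convex_Ioi 0) ?_ (by simpa using hneg)⟩
  intro κ hκ
  obtain ⟨d, -, h⟩ := exists_hasDerivAt_deriv_mul_cww_neg hκ
  exact h.continuousAt.continuousWithinAt
end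

section
/- Let κ > 0 and define ω(s,±) = s·(c_ww(κ) ± c_ww(κ s)) for s ∈ ℝ, where c_ww is extended evenly. Then for every integer n and every ξ ∈ (0, 1/2], both ω(n+ξ, +) ≠ 0 and ω(n+ξ, −) ≠ 0; that is, away from the zero Floquet exponent none of the eigenvalues i ω(n+ξ, ±) of the linearization about the rest state lies at the origin. -/
/-! `ω(s,+) ≠ 0` because `c_ww > 0`. For `ω(s,-)`: `tanh` is strictly concave on `[0, ∞)` with
`tanh 0 = 0`, so its secant slope `tanh k / k`, and with it `c_ww`, strictly decreases in `|k|`.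
Hence `c_ww(κ s) = c_ww(κ)` forces `|s| = 1`, whereas `s = n + ξ` with `0 < ξ < 1` is never an
integer. -/

open Real Set

namespace Real

theorem hasDerivAt_tanh_s7 (x : ℝ) : HasDerivAt tanh (cosh x ^ 2)⁻¹ x := by
  have h := (hasDerivAt_sinh x).div (hasDerivAt_cosh x) (cosh_pos x).ne'
  have hfun : sinh / cosh = tanh := funext fun y => (tanh_eq_sinh_div_cosh y).symm
  rwa [hfun, ← sq, ← sq, cosh_sq_sub_sinh_sq, one_div] at h

theorem tanh_pos_s7 {x : ℝ} (hx : 0 < x) : 0 < tanh x := by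
  rw [tanh_eq_sinh_div_cosh]
  exact div_pos (sinh_pos_iff.2 hx) (cosh_pos x)

theorem strictConcaveOn_tanh : StrictConcaveOn ℝ (Ici 0) tanh := by
  have hcont : Continuous tanh := continuous_iff_continuousAt.2 fun x =>
    (hasDerivAt_tanh_s7 x).continuousAt
  refine StrictAntiOn.strictConcaveOn_of_deriv (convex_Ici 0) hcont.continuousOn ?_
  rw [interior_Ici]
  intro a ha b hb hab
  simp only [(hasDerivAt_tanh_s7 _).deriv]
  have hcosh : cosh a < cosh b := cosh_strictMonoOn (mem_Ioi.1 ha).le (mem_Ioi.1 hb).le hab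
  gcongr

theorem strictAntiOn_tanh_div_self : StrictAntiOn (fun x => tanh x / x) (Ioi 0) := by
  intro a ha b hb hab
  have := strictConcaveOn_tanh.secant_strict_mono (a := 0) self_mem_Ici (mem_Ioi.1 ha).le
    (mem_Ioi.1 hb).le (ne_of_gt ha) (ne_of_gt hb) hab
  simpa only [tanh_zero, sub_zero] using this

theorem tanh_abs_div_abs (x : ℝ) : tanh |x| / |x| = tanh x / x := by
  rcases abs_choice x with h | h <;> rw [h]
  rw [tanh_neg, neg_div_neg_eq]

end Real

theorem cww_of_ne_zero {k : ℝ} (hk : k ≠ 0) : cww k = √(tanh |k| / |k|) := by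
  rw [cww, if_neg hk, tanh_abs_div_abs]

theorem cww_abs (k : ℝ) : cww |k| = cww k := by
  rcases eq_or_ne k 0 with rfl | hk
  · rw [abs_zero]
  · rw [cww_of_ne_zero hk, cww_of_ne_zero (abs_ne_zero.2 hk), abs_abs]

theorem cww_pos (k : ℝ) : 0 < cww k := by
  rcases eq_or_ne k 0 with rfl | hk
  · simp [cww]
  · rw [cww_of_ne_zero hk]
    have hk' : 0 < |k| := abs_pos.2 hk
    exact sqrt_pos.2 (div_pos (tanh_pos_s7 hk') hk')

theorem cww_strictAntiOn : StrictAntiOn cww (Ioi 0) := by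
  intro a ha b hb hab
  rw [cww_of_ne_zero (ne_of_gt ha), cww_of_ne_zero (ne_of_gt hb),
    abs_of_pos (show 0 < a from ha), abs_of_pos (show 0 < b from hb)]
  exact sqrt_lt_sqrt (div_pos (tanh_pos_s7 hb) hb).le (strictAntiOn_tanh_div_self ha hb hab)

theorem abs_eq_abs_of_cww_eq {a b : ℝ} (ha : a ≠ 0) (hb : b ≠ 0) (h : cww a = cww b) :
    |a| = |b| :=
  cww_strictAntiOn.injOn (abs_pos.2 ha) (abs_pos.2 hb) (by rwa [cww_abs, cww_abs])

theorem intCast_add_ne_intCast {ξ : ℝ} (h0 : 0 < ξ) (h1 : ξ < 1) (n m : ℤ) :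
    (n : ℝ) + ξ ≠ m := by
  intro h
  have hlo : n < m := by exact_mod_cast (by linarith : (n : ℝ) < m)
  have hhi : m < n + 1 := by exact_mod_cast (by linarith : (m : ℝ) < n + 1)
  omega

/-- For `κ > 0` and nonzero Floquet exponent `ξ ∈ (0, 1/2]`, none of the eigenvalues
`i ω(n+ξ, ±)` of the linearization about the rest state lies at the origin, where
`ω(s,±) = s(c_ww(κ) ± c_ww(κ s))`. -/
theorem omega_ne_zero_of_floquet_pos (κ : ℝ) (hκ : 0 < κ) (n : ℤ)
    (ξ : ℝ) (hξ : ξ ∈ Set.Ioc (0 : ℝ) (1 / 2)) :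
    ((n : ℝ) + ξ) * (cww κ + cww (κ * ((n : ℝ) + ξ))) ≠ 0 ∧
    ((n : ℝ) + ξ) * (cww κ - cww (κ * ((n : ℝ) + ξ))) ≠ 0 := by
  have hnot_int : ∀ m : ℤ, (n : ℝ) + ξ ≠ m := intCast_add_ne_intCast hξ.1 (by linarith [hξ.2]) n
  have hs : (n : ℝ) + ξ ≠ 0 := by exact_mod_cast hnot_int 0
  refine ⟨mul_ne_zero hs (add_pos (cww_pos _) (cww_pos _)).ne',
    mul_ne_zero hs (sub_ne_zero.2 fun h => ?_)⟩
  have habs := abs_eq_abs_of_cww_eq hκ.ne' (mul_ne_zero hκ.ne' hs) h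
  rw [abs_mul, abs_of_pos hκ, eq_comm, mul_eq_left₀ hκ.ne'] at habs
  rcases (abs_eq zero_le_one).1 habs with h1 | h1
  · exact hnot_int 1 (by exact_mod_cast h1)
  · exact hnot_int (-1) (by exact_mod_cast h1)
end
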